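/- arXiv:2208.01986 — 13 statements merged into one kernel-verified Lean document; each statement's English description precedes it below -/
import Mathlib

section
/- For every ideal I of R, the S-radical of I equals the intersection of all prime ideals P of R with I ⊆ P and P ∩ S = ∅ (where this intersection is R if no such prime exists). In particular, if Q is a prime ideal of R disjoint from S, then √[S](Q) = Q. -/
/-- An ideal `P` is `S`-prime if `P ∩ S = ∅` and there is `s ∈ S` such that
whenever `a * b ∈ P`, either `s * a ∈ P` or `s * b ∈ P`. -/
def IsSPrime {R : Type*} [CommRing R] (S : Set R) (P : Ideal R) : Prop :=
  (P : Set R) ∩ S = ∅ ∧ ∃ s ∈ S, ∀ a b : R, a * b ∈ P → s * a ∈ P ∨ s * b ∈ P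

/-- The `S`-prime spectrum `Spec_S R`: the set of all `S`-prime ideals of `R`. -/
def SSpec {R : Type*} [CommRing R] (S : Set R) : Type _ :=
  {P : Ideal R // IsSPrime S P}

/-- The `S`-variety of an ideal `I`:
`V_S(I) = {P ∈ Spec_S R | s • I ⊆ P for some s ∈ S}`. -/
def SVar {R : Type*} [CommRing R] (S : Set R) (I : Ideal R) : Set (SSpec S) :=
  {P | ∃ s ∈ S, ∀ x ∈ I, s * x ∈ P.1}

/-- The `S`-radical of an ideal `I`:
`√[S](I) = {a ∈ R | s * a ^ n ∈ I for some s ∈ S, n ∈ ℕ}`. -/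
def SRad {R : Type*} [CommRing R] (S : Set R) (I : Ideal R) : Set R :=
  {a | ∃ s ∈ S, ∃ n : ℕ, s * a ^ n ∈ I}

/-- The `S`-Zariski topology on `Spec_S R`: the closed sets are exactly the `V_S(I)`. -/
def sZariskiTop {R : Type*} [CommRing R] (S : Set R) : TopologicalSpace (SSpec S) :=
  TopologicalSpace.generateFrom {U | ∃ I : Ideal R, U = (SVar S I)ᶜ}

/-- The `S`-flat topology on `Spec_S R`: the coarsest topology in which every
`V_S(f)`, `f ∈ R`, is open. -/
def sFlatTop {R : Type*} [CommRing R] (S : Set R) : TopologicalSpace (SSpec S) :=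
  TopologicalSpace.generateFrom {U | ∃ f : R, U = SVar S (Ideal.span {f})}

/-- An ideal `I` is `S`-radically finite if `√[S](I) = √[S](J)` for some finitely
generated ideal `J`. -/
def SRadFinite {R : Type*} [CommRing R] (S : Set R) (I : Ideal R) : Prop :=
  ∃ J : Ideal R, J.FG ∧ SRad S I = SRad S J

/-- For every ideal `I` of `R`, the `S`-radical of `I` equals the intersection of all
prime ideals `P` of `R` with `I ⊆ P` and `P ∩ S = ∅` (the intersection being all of `R`
if no such prime exists). In particular, if `Q` is prime and disjoint from `S`,
then `√[S](Q) = Q`. -/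
theorem sRad_eq_sInter_primes {R : Type*} [CommRing R] [Nontrivial R] (S : Set R)
    (hS0 : (0 : R) ∉ S) (hS1 : (1 : R) ∈ S) (hSmul : ∀ s ∈ S, ∀ t ∈ S, s * t ∈ S) :
    (∀ I : Ideal R,
      SRad S I = ⋂ P ∈ {P : Ideal R | P.IsPrime ∧ I ≤ P ∧ (P : Set R) ∩ S = ∅},
        (P : Set R)) ∧
    (∀ Q : Ideal R, Q.IsPrime → (Q : Set R) ∩ S = ∅ → SRad S Q = (Q : Set R)) := by
  have main : ∀ I : Ideal R,
      SRad S I = ⋂ P ∈ {P : Ideal R | P.IsPrime ∧ I ≤ P ∧ (P : Set R) ∩ S = ∅},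
        (P : Set R) := by
    intro I
    ext a
    simp only [Set.mem_iInter, Set.mem_setOf_eq]
    constructor
    · rintro ⟨s, hs, n, hsn⟩ P ⟨hP, hIP, hPS⟩
      have hsP : s ∉ P := fun h => Set.eq_empty_iff_forall_notMem.mp hPS s ⟨h, hs⟩
      have : a ^ n ∈ P := ((hP.mul_mem_iff_mem_or_mem.mp (hIP hsn)).resolve_left hsP)
      exact hP.mem_of_pow_mem n this
    · intro h
      by_contra ha
      -- build the submonoid of elements s * a ^ n
      set T : Submonoid R :=
        { carrier := {x | ∃ s ∈ S, ∃ n : ℕ, x = s * a ^ n}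
          one_mem' := ⟨1, hS1, 0, by ring⟩
          mul_mem' := by
            rintro x y ⟨s, hs, n, rfl⟩ ⟨t, ht, m, rfl⟩
            exact ⟨s * t, hSmul s hs t ht, n + m, by ring⟩ } with hT
      have hdisj : Disjoint (I : Set R) (T : Set R) := by
        rw [Set.disjoint_left]
        rintro x hxI ⟨s, hs, n, rfl⟩
        exact ha ⟨s, hs, n, hxI⟩
      obtain ⟨P, hP, hIP, hPT⟩ := Ideal.exists_le_prime_disjoint I T hdisj
      have hPS : (P : Set R) ∩ S = ∅ := by
        rw [Set.eq_empty_iff_forall_notMem]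
        rintro x ⟨hxP, hxS⟩
        exact Set.disjoint_left.mp hPT hxP ⟨x, hxS, 0, by ring⟩
      have haP : a ∈ P := h P ⟨hP, hIP, hPS⟩
      exact Set.disjoint_left.mp hPT haP ⟨1, hS1, 1, by ring⟩
  refine ⟨main, fun Q hQ hQS => ?_⟩
  rw [main Q]
  apply subset_antisymm
  · exact Set.iInter_subset_of_subset Q (Set.iInter_subset_of_subset ⟨hQ, le_refl Q, hQS⟩ le_rfl)
  · intro x hx
    simp only [Set.mem_iInter, Set.mem_setOf_eq]
    rintro P ⟨hP, hQP, hPS⟩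
    exact hQP hx
end

section
/- Let I and J be ideals of R. Then: (1) V_S(I) ⊆ V_S(J) if and only if √[S](J) ⊆ √[S](I); (2) V_S(I) = V_S(J) if and only if √[S](I) = √[S](J); (3) V_S(I) = Spec_S R if and only if √[S](I) = √[S]((0)); (4) V_S(I) = ∅ if and only if √[S](I) = R, if and only if I ∩ S ≠ ∅. -/
section Aux
variable {R : Type*} [CommRing R] {S : Set R}

lemma sPrime_pow_mem (hSmul : ∀ s ∈ S, ∀ t ∈ S, s * t ∈ S)
    {P : Ideal R} (hdisj : (P : Set R) ∩ S = ∅)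
    {t : R} (ht : t ∈ S) (htw : ∀ a b : R, a * b ∈ P → t * a ∈ P ∨ t * b ∈ P)
    {x : R} : ∀ n : ℕ, ∀ v ∈ S, v * x ^ n ∈ P → t * x ∈ P := by
  intro n
  induction n with
  | zero =>
    intro v hv hmem
    simp only [pow_zero, mul_one] at hmem
    exact absurd (Set.mem_inter hmem hv) (by simp [hdisj])
  | succ n ih =>
    intro v hv hmem
    rw [pow_succ, ← mul_assoc] at hmem
    rcases htw _ _ hmem with h | h
    · rw [show t * (v * x ^ n) = (t * v) * x ^ n by ring] at h
      exact ih _ (hSmul t ht v hv) h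
    · exact h

/-- If `a ∉ √[S](I)` then there is an `S`-prime `P ∈ V_S(I)` avoiding all
`v * a ^ n`, `v ∈ S`. -/
lemma exists_sPrime_avoiding (hS1 : (1 : R) ∈ S)
    (hSmul : ∀ s ∈ S, ∀ t ∈ S, s * t ∈ S)
    (I : Ideal R) {a : R} (ha : a ∉ SRad S I) :
    ∃ P : SSpec S, P ∈ SVar S I ∧ ∀ v ∈ S, ∀ n : ℕ, v * a ^ n ∉ P.1 := by
  set M : Submonoid R :=
    { carrier := {r | ∃ v ∈ S, ∃ n : ℕ, r = v * a ^ n}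
      one_mem' := ⟨1, hS1, 0, by simp⟩
      mul_mem' := by
        rintro x y ⟨v, hv, m, rfl⟩ ⟨w, hw, n, rfl⟩
        exact ⟨v * w, hSmul v hv w hw, m + n, by ring⟩ } with hM
  have hdisjIM : Disjoint (I : Set R) (M : Set R) := by
    rw [Set.disjoint_left]
    rintro x hx ⟨v, hv, n, rfl⟩
    exact ha ⟨v, hv, n, hx⟩
  obtain ⟨P, hPprime, hIP, hPdisj⟩ := Ideal.exists_le_prime_disjoint I M hdisjIM
  have hPS : (P : Set R) ∩ S = ∅ := by
    rw [Set.eq_empty_iff_forall_notMem]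
    rintro x ⟨hxP, hxS⟩
    exact Set.disjoint_left.mp hPdisj hxP ⟨x, hxS, 0, by simp⟩
  refine ⟨⟨P, hPS, 1, hS1, fun b c hbc => by
      rcases hPprime.mem_or_mem hbc with h | h
      · exact Or.inl (by simpa using h)
      · exact Or.inr (by simpa using h)⟩,
    ⟨1, hS1, fun x hx => by simpa using hIP hx⟩, ?_⟩
  intro v hv n hmem
  exact Set.disjoint_left.mp hPdisj hmem ⟨v, hv, n, rfl⟩

end Aux


/-- Relations between `S`-varieties and `S`-radicals. -/
theorem sVar_sRad_relations {R : Type*} [CommRing R] [Nontrivial R] (S : Set R)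
    (hS0 : (0 : R) ∉ S) (hS1 : (1 : R) ∈ S) (hSmul : ∀ s ∈ S, ∀ t ∈ S, s * t ∈ S)
    (I J : Ideal R) :
    (SVar S I ⊆ SVar S J ↔ SRad S J ⊆ SRad S I) ∧
    (SVar S I = SVar S J ↔ SRad S I = SRad S J) ∧
    (SVar S I = Set.univ ↔ SRad S I = SRad S (0 : Ideal R)) ∧
    (SVar S I = ∅ ↔ SRad S I = Set.univ) ∧
    (SVar S I = ∅ ↔ ((I : Set R) ∩ S).Nonempty) := by
  -- main equivalence, for arbitrary ideals
  have main : ∀ I J : Ideal R, SVar S I ⊆ SVar S J ↔ SRad S J ⊆ SRad S I := by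
    intro I J
    constructor
    · intro hsub a haJ
      by_contra haI
      obtain ⟨P, hPI, hPavoid⟩ := exists_sPrime_avoiding hS1 hSmul I haI
      obtain ⟨t, ht, htJ⟩ := hsub hPI
      obtain ⟨s, hs, n, hsJ⟩ := haJ
      have : t * (s * a ^ n) ∈ P.1 := htJ _ hsJ
      rw [← mul_assoc] at this
      exact hPavoid (t * s) (hSmul t ht s hs) n this
    · rintro hrad P ⟨s, hs, hsI⟩
      obtain ⟨hPdisj, t, ht, htw⟩ := P.2
      refine ⟨t, ht, fun x hx => ?_⟩
      obtain ⟨u, hu, n, hun⟩ := hrad ⟨1, hS1, 1, by simpa using hx⟩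
      have : (s * u) * x ^ n ∈ P.1 := by
        rw [show (s * u) * x ^ n = s * (u * x ^ n) by ring]
        exact hsI _ hun
      exact sPrime_pow_mem hSmul hPdisj ht htw n _ (hSmul s hs u hu) this
  have h2 : ∀ I J : Ideal R, (SVar S I = SVar S J ↔ SRad S I = SRad S J) := by
    intro I J
    rw [Set.Subset.antisymm_iff, Set.Subset.antisymm_iff, main, main]
    tauto
  -- V_S(0) = univ
  have hV0 : SVar S (0 : Ideal R) = Set.univ := by
    ext P
    simp only [Set.mem_univ, iff_true]
    exact ⟨1, hS1, fun x hx => by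
      have hx0 : x = 0 := by simpa using hx
      simp [hx0]⟩
  -- (4) second form
  have h4S : (SVar S I = ∅ ↔ ((I : Set R) ∩ S).Nonempty) := by
    constructor
    · intro hemp
      by_contra hne
      have hdisj : Disjoint (I : Set R) S := by
        rw [Set.disjoint_left]
        intro x hx hxS
        exact hne ⟨x, hx, hxS⟩
      set M : Submonoid R :=
        { carrier := S
          one_mem' := hS1
          mul_mem' := fun {x y} hx hy => hSmul x hx y hy } with hM
      obtain ⟨P, hPprime, hIP, hPdisj⟩ := Ideal.exists_le_prime_disjoint I M hdisj
      have hPS : (P : Set R) ∩ S = ∅ := by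
        rw [Set.eq_empty_iff_forall_notMem]
        rintro x ⟨hxP, hxS⟩
        exact Set.disjoint_left.mp hPdisj hxP hxS
      have : (⟨P, hPS, 1, hS1, fun b c hbc => by
          rcases hPprime.mem_or_mem hbc with h | h
          · exact Or.inl (by simpa using h)
          · exact Or.inr (by simpa using h)⟩ : SSpec S) ∈ SVar S I :=
        ⟨1, hS1, fun x hx => by simpa using hIP hx⟩
      rw [hemp] at this
      exact this
    · rintro ⟨x, hxI, hxS⟩
      rw [Set.eq_empty_iff_forall_notMem]
      rintro P ⟨s, hs, hsI⟩
      have : s * x ∈ P.1 := hsI x hxI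
      have hmem : s * x ∈ (P.1 : Set R) ∩ S := ⟨this, hSmul s hs x hxS⟩
      rw [P.2.1] at hmem
      exact hmem
  have h4R : (SVar S I = ∅ ↔ SRad S I = Set.univ) := by
    rw [h4S]
    constructor
    · rintro ⟨x, hxI, hxS⟩
      ext a
      simp only [Set.mem_univ, iff_true]
      exact ⟨x, hxS, 0, by simpa using hxI⟩
    · intro hrad
      have h1 : (1 : R) ∈ SRad S I := by rw [hrad]; trivial
      obtain ⟨s, hs, n, hsn⟩ := h1
      simp only [one_pow, mul_one] at hsn
      exact ⟨s, hsn, hs⟩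
  exact ⟨main I J, h2 I J, by rw [← h2 I 0, hV0, eq_comm], h4R, h4S⟩
end

section
/- An ideal I of R is S-radically finite if and only if there exists a finitely generated ideal J of R with J ⊆ I such that √[S](I) = √[S](J). -/
section Aux

variable {R : Type*} [CommRing R] {S : Set R}

lemma sRad_mono {I J : Ideal R} (h : I ≤ J) : SRad S I ⊆ SRad S J := by
  rintro a ⟨s, hs, n, hn⟩
  exact ⟨s, hs, n, h hn⟩

lemma mem_sRad_self (hS1 : (1 : R) ∈ S) {I : Ideal R} {x : R} (hx : x ∈ I) :
    x ∈ SRad S I := ⟨1, hS1, 1, by simpa using hx⟩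

lemma pow_mem_S (hS1 : (1 : R) ∈ S) (hSmul : ∀ s ∈ S, ∀ t ∈ S, s * t ∈ S)
    {s : R} (hs : s ∈ S) : ∀ n : ℕ, s ^ n ∈ S
  | 0 => by simpa using hS1
  | n + 1 => by
      rw [pow_succ]
      exact hSmul _ (pow_mem_S hS1 hSmul hs n) _ hs

/-- `SRad S I` as an ideal. -/
def sRadIdeal (hS1 : (1 : R) ∈ S) (hSmul : ∀ s ∈ S, ∀ t ∈ S, s * t ∈ S)
    (I : Ideal R) : Ideal R where
  carrier := SRad S I
  zero_mem' := ⟨1, hS1, 1, by simpa using I.zero_mem⟩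
  smul_mem' := by
    rintro c x ⟨s, hs, n, hn⟩
    refine ⟨s, hs, n, ?_⟩
    have : s * (c • x) ^ n = c ^ n * (s * x ^ n) := by
      simp [smul_eq_mul, mul_pow]; ring
    rw [this]
    exact I.mul_mem_left _ hn
  add_mem' := by
    rintro a b ⟨s, hs, n, hn⟩ ⟨t, ht, m, hm⟩
    refine ⟨s * t, hSmul _ hs _ ht, n + m, ?_⟩
    rw [add_pow, Finset.mul_sum]
    refine Ideal.sum_mem _ fun i hi => ?_
    rcases le_or_gt n i with h | h
    · have hai : a ^ i = a ^ n * a ^ (i - n) := by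
        rw [← pow_add, Nat.add_sub_cancel' h]
      have : s * t * (a ^ i * b ^ (n + m - i) * (n + m).choose i) =
          (s * a ^ n) * (t * a ^ (i - n) * b ^ (n + m - i) * (n + m).choose i) := by
        rw [hai]; ring
      rw [this]
      exact I.mul_mem_right _ hn
    · have hmi : m ≤ n + m - i := by omega
      have hbi : b ^ (n + m - i) = b ^ m * b ^ (n + m - i - m) := by
        rw [← pow_add, Nat.add_sub_cancel' hmi]
      have : s * t * (a ^ i * b ^ (n + m - i) * (n + m).choose i) =
          (t * b ^ m) * (s * a ^ i * b ^ (n + m - i - m) * (n + m).choose i) := by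
        rw [hbi]; ring
      rw [this]
      exact I.mul_mem_right _ hm

lemma mem_sRad_of_pow_mem_sRad (hS1 : (1 : R) ∈ S)
    (hSmul : ∀ s ∈ S, ∀ t ∈ S, s * t ∈ S) {K : Ideal R} {a s : R} {n : ℕ}
    (hs : s ∈ S) (h : s * a ^ n ∈ SRad S K) : a ∈ SRad S K := by
  obtain ⟨t, ht, m, htm⟩ := h
  refine ⟨t * s ^ m, hSmul _ ht _ (pow_mem_S hS1 hSmul hs m), n * m, ?_⟩
  have : t * s ^ m * a ^ (n * m) = t * (s * a ^ n) ^ m := by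
    rw [mul_pow, pow_mul]; ring
  rw [this]
  exact htm

end Aux

/-- An ideal `I` is `S`-radically finite if and only if there is a finitely generated
ideal `J ⊆ I` with `√[S](I) = √[S](J)`. -/
theorem sRadFinite_iff_exists_fg_le {R : Type*} [CommRing R] [Nontrivial R] (S : Set R)
    (hS0 : (0 : R) ∉ S) (hS1 : (1 : R) ∈ S) (hSmul : ∀ s ∈ S, ∀ t ∈ S, s * t ∈ S)
    (I : Ideal R) :
    SRadFinite S I ↔ ∃ J : Ideal R, J.FG ∧ J ≤ I ∧ SRad S I = SRad S J := by
  classical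
  constructor
  · rintro ⟨J, ⟨T, hT⟩, hEq⟩
    -- choose witnesses for every element of `SRad S I`
    have hch : ∀ x ∈ SRad S I, ∃ s ∈ S, ∃ n : ℕ, s * x ^ n ∈ I := fun x hx => hx
    choose! f hfS g hfg using hch
    -- each generator of `J` lies in `SRad S I`
    have hTmem : ∀ x ∈ T, x ∈ SRad S I := by
      intro x hx
      rw [hEq, ← hT]
      exact mem_sRad_self hS1 (Ideal.subset_span hx)
    set J' : Ideal R := Ideal.span ((T.image fun x => f x * x ^ g x : Finset R) : Set R)
      with hJ'
    have hJ'fg : J'.FG := ⟨_, rfl⟩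
    have hJ'le : J' ≤ I := by
      rw [hJ', Ideal.span_le]
      intro y hy
      simp only [Finset.coe_image, Set.mem_image, Finset.mem_coe] at hy
      obtain ⟨x, hx, rfl⟩ := hy
      exact hfg x (hTmem x hx)
    refine ⟨J', hJ'fg, hJ'le, Set.Subset.antisymm ?_ (sRad_mono hJ'le)⟩
    -- `SRad S I ⊆ SRad S J'`
    intro a ha
    rw [hEq] at ha
    obtain ⟨s, hs, n, hn⟩ := ha
    -- `s * a ^ n ∈ J = span T ⊆ sRadIdeal J'`
    have hspan : J ≤ sRadIdeal hS1 hSmul J' := by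
      rw [← hT, Ideal.span_le]
      intro x hx
      refine ⟨f x, hfS x (hTmem x hx), g x, Ideal.subset_span ?_⟩
      simp only [Finset.coe_image, Set.mem_image, Finset.mem_coe]
      exact ⟨x, hx, rfl⟩
    exact mem_sRad_of_pow_mem_sRad hS1 hSmul hs (hspan hn)
  · rintro ⟨J, hfg, _, hEq⟩
    exact ⟨J, hfg, hEq⟩
end

section
/- Let I be an ideal of R. Then D_S(I) is quasi-compact with respect to the S-Zariski topology if and only if I is S-radically finite. -/
/-!
For an `S`-prime `P` with witness `s`, the saturation `{x | ∃ t ∈ S, t * x ∈ P}` is the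
ideal `(P : s)`; it is prime, disjoint from `S`, and `P ∈ V_S(K)` exactly when it contains `K`.
So `V_S` turns sums of ideals into intersections and finite intersections into unions, every
open set is some `D_S(K)`, and a prime ideal avoiding `S · aᴺ` gives the `S`-Nullstellensatz
`V_S(K) ⊆ V_S(J) ↔ √[S](J) ⊆ √[S](K)`. Each `D_S(a)` is quasi-compact, because
`a ∈ √[S](⨆ i, K i)` is witnessed inside finitely many `K i`; hence so is
`D_S((T)) = ⋃ a ∈ T, D_S(a)` for finite `T`. Conversely, a finite subcover of
`D_S(I) = ⋃ a ∈ I, D_S(a)` yields a finite `T ⊆ I` with `V_S(I) = V_S((T))`.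
-/

open Ideal

lemma sVar_anti {R : Type*} [CommRing R] {S : Set R} {K J : Ideal R} (h : K ≤ J) :
    SVar S J ⊆ SVar S K :=
  fun _ ⟨s, hs, hJ⟩ => ⟨s, hs, fun x hx => hJ x (h hx)⟩

namespace SSpec

variable {R : Type*} [CommRing R] {M : Submonoid R}

def ofPrime (p : Ideal R) [p.IsPrime] (hp : Disjoint (p : Set R) M) : SSpec (M : Set R) :=
  ⟨p, Set.disjoint_iff_inter_eq_empty.mp hp, 1, M.one_mem, fun a b hab => by
    simpa using (‹p.IsPrime›.mem_or_mem hab)⟩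

lemma notMem_of_mem_submonoid (P : SSpec (M : Set R)) {t : R} (ht : t ∈ M) : t ∉ P.1 :=
  fun h => Set.eq_empty_iff_forall_notMem.mp P.2.1 t ⟨h, ht⟩

def saturation (P : SSpec (M : Set R)) : Ideal R where
  carrier := {x | ∃ t ∈ M, t * x ∈ P.1}
  zero_mem' := ⟨1, M.one_mem, by simp⟩
  add_mem' := by
    rintro x y ⟨t, ht, hx⟩ ⟨u, hu, hy⟩
    refine ⟨t * u, M.mul_mem ht hu, ?_⟩
    rw [show t * u * (x + y) = t * x * u + t * (u * y) by ring]
    exact add_mem (P.1.mul_mem_right u hx) (P.1.mul_mem_left t hy)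
  smul_mem' := by
    rintro c x ⟨t, ht, hx⟩
    exact ⟨t, ht, by rw [smul_eq_mul, mul_left_comm]; exact P.1.mul_mem_left c hx⟩

lemma exists_forall_mul_mem_of_mem_saturation (P : SSpec (M : Set R)) :
    ∃ s ∈ M, ∀ x ∈ P.saturation, s * x ∈ P.1 := by
  obtain ⟨s, hs, hprime⟩ := P.2.2
  refine ⟨s, hs, fun x ⟨t, ht, htx⟩ => ?_⟩
  exact (hprime t x htx).resolve_left (P.notMem_of_mem_submonoid (M.mul_mem hs ht))

lemma saturation_isPrime (P : SSpec (M : Set R)) : P.saturation.IsPrime := by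
  obtain ⟨s, hs, hprime⟩ := P.2.2
  refine ⟨fun htop => ?_, fun {x y} ⟨t, ht, hxy⟩ => ?_⟩
  · obtain ⟨t, ht, h⟩ := (eq_top_iff_one _).mp htop
    exact P.notMem_of_mem_submonoid ht (by rwa [mul_one] at h)
  · rw [← mul_assoc] at hxy
    rcases hprime (t * x) y hxy with h | h
    · exact Or.inl ⟨s * t, M.mul_mem hs ht, by rwa [mul_assoc]⟩
    · exact Or.inr ⟨s, hs, h⟩

lemma mem_sVar_iff {P : SSpec (M : Set R)} {K : Ideal R} :
    P ∈ SVar M K ↔ K ≤ P.saturation := by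
  refine ⟨fun ⟨s, hs, hK⟩ x hx => ⟨s, hs, hK x hx⟩, fun hK => ?_⟩
  obtain ⟨s, hs, hsat⟩ := P.exists_forall_mul_mem_of_mem_saturation
  exact ⟨s, hs, fun x hx => hsat x (hK hx)⟩

lemma sVar_top : SVar M (⊤ : Ideal R) = ∅ :=
  Set.eq_empty_of_forall_notMem fun P hP =>
    P.saturation_isPrime.ne_top (top_le_iff.mp (mem_sVar_iff.mp hP))

lemma sVar_inf (K J : Ideal R) : SVar M (K ⊓ J) = SVar M K ∪ SVar M J := by
  ext P
  simp only [Set.mem_union, mem_sVar_iff]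
  exact P.saturation_isPrime.inf_le

lemma sVar_iSup {ι : Sort*} (K : ι → Ideal R) : SVar M (⨆ i, K i) = ⋂ i, SVar M (K i) := by
  ext P
  simp only [Set.mem_iInter, mem_sVar_iff, iSup_le_iff]

lemma sVar_span (s : Set R) : SVar M (span s) = ⋂ a ∈ s, SVar M (span {a}) := by
  ext P
  simp only [Set.mem_iInter, mem_sVar_iff, span_le, Set.singleton_subset_iff]
  rfl

lemma sRad_subset_saturation {P : SSpec (M : Set R)} {K : Ideal R} (h : K ≤ P.saturation) :
    SRad M K ⊆ (P.saturation : Set R) := by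
  rintro a ⟨t, ht, n, htn⟩
  have hp := P.saturation_isPrime
  refine hp.mem_of_pow_mem n ((hp.mem_or_mem (h htn)).resolve_left fun hsat => ?_)
  obtain ⟨u, hu, hut⟩ := hsat
  exact P.notMem_of_mem_submonoid (M.mul_mem hu ht) hut

lemma sVar_subset_sVar_span_singleton_iff {K : Ideal R} {a : R} :
    SVar M K ⊆ SVar M (span {a}) ↔ a ∈ SRad M K := by
  refine ⟨fun hV => ?_, fun ha P hP => ?_⟩
  · by_contra ha
    have hdisj : Disjoint (K : Set R) (M ⊔ Submonoid.powers a : Submonoid R) := by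
      refine Set.disjoint_right.mpr fun x hx hxK => ?_
      obtain ⟨t, ht, _, ⟨n, rfl⟩, rfl⟩ := Submonoid.mem_sup.mp hx
      exact ha ⟨t, ht, n, hxK⟩
    obtain ⟨p, hp, hKp, hpM⟩ := exists_le_prime_disjoint K _ hdisj
    have hQ : ofPrime p (hpM.mono_right (SetLike.coe_subset_coe.mpr le_sup_left)) ∈ SVar M K :=
      ⟨1, M.one_mem, fun x hx => by rw [one_mul]; exact hKp hx⟩
    obtain ⟨t, ht, hta⟩ := hV hQ
    refine Set.disjoint_left.mp hpM (hta a (mem_span_singleton_self a)) ?_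
    exact Submonoid.mem_sup.mpr ⟨t, ht, a, Submonoid.mem_powers a, rfl⟩
  · rw [mem_sVar_iff, span_singleton_le_iff_mem] at *
    exact sRad_subset_saturation hP ha

lemma sVar_subset_sVar_iff {K J : Ideal R} : SVar M K ⊆ SVar M J ↔ SRad M J ⊆ SRad M K := by
  refine ⟨fun hV a ⟨t, ht, n, hJ⟩ => ?_, fun hrad P hP => ?_⟩
  · exact sVar_subset_sVar_span_singleton_iff.mp
      (hV.trans (sVar_subset_sVar_span_singleton_iff.mpr ⟨t, ht, n, hJ⟩))
  · rw [mem_sVar_iff] at *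
    exact fun x hx => sRad_subset_saturation hP (hrad ⟨1, M.one_mem, 1, by simpa using hx⟩)

lemma sVar_eq_sVar_iff {K J : Ideal R} : SVar M K = SVar M J ↔ SRad M K = SRad M J := by
  simp only [subset_antisymm_iff, sVar_subset_sVar_iff, and_comm]

attribute [local instance] sZariskiTop

lemma isOpen_compl_sVar (K : Ideal R) : IsOpen (SVar M K)ᶜ :=
  .basic _ ⟨K, rfl⟩

lemma exists_eq_compl_sVar_of_isOpen {U : Set (SSpec (M : Set R))} (hU : IsOpen U) :
    ∃ K : Ideal R, U = (SVar M K)ᶜ := by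
  induction hU with
  | basic U hU => exact hU
  | univ => exact ⟨⊤, by rw [sVar_top, Set.compl_empty]⟩
  | inter U V _ _ hU hV =>
    obtain ⟨K, rfl⟩ := hU
    obtain ⟨J, rfl⟩ := hV
    exact ⟨K ⊓ J, by rw [sVar_inf, Set.compl_union]⟩
  | sUnion 𝒰 _ h𝒰 =>
    choose K hK using h𝒰
    refine ⟨⨆ U : 𝒰, K U U.2, ?_⟩
    rw [sVar_iSup, Set.compl_iInter, Set.sUnion_eq_iUnion]
    exact Set.iUnion_congr fun U => hK U U.2

lemma compl_sVar_span (s : Set R) :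
    (SVar M (span s))ᶜ = ⋃ a ∈ s, (SVar M (span {a}))ᶜ := by
  rw [sVar_span, Set.compl_iInter₂]

lemma isCompact_compl_sVar_span_singleton (a : R) :
    IsCompact (SVar M (span {a}))ᶜ := by
  refine isCompact_of_finite_subcover fun U hU hcover => ?_
  choose K hK using fun i => exists_eq_compl_sVar_of_isOpen (hU i)
  simp only [hK, ← Set.compl_iInter, ← sVar_iSup, Set.compl_subset_compl] at hcover ⊢
  obtain ⟨t, ht, n, htn⟩ := sVar_subset_sVar_span_singleton_iff.mp hcover
  obtain ⟨F, hF⟩ := Submodule.mem_iSup_iff_exists_finset.mp htn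
  refine ⟨F, sVar_subset_sVar_span_singleton_iff.mpr ⟨t, ht, n, ?_⟩⟩
  simpa only [iSup_subtype'] using hF

lemma sRadFinite_of_isCompact_compl_sVar {I : Ideal R} (hI : IsCompact (SVar M I)ᶜ) :
    SRadFinite M I := by
  have hcover : (SVar M I)ᶜ ⊆ ⋃ a ∈ (I : Set R), (SVar M (span {a}))ᶜ := by
    rw [← compl_sVar_span, span_eq]
  obtain ⟨T, hTI, hT, hsub⟩ :=
    hI.elim_finite_subcover_image (fun a _ => isOpen_compl_sVar (span {a})) hcover
  rw [← compl_sVar_span, Set.compl_subset_compl] at hsub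
  exact ⟨span T, Submodule.fg_span hT,
    sVar_eq_sVar_iff.mp ((sVar_anti (span_le.mpr hTI)).antisymm hsub)⟩

lemma isCompact_compl_sVar_of_sRadFinite {I : Ideal R} (hI : SRadFinite M I) :
    IsCompact (SVar M I)ᶜ := by
  obtain ⟨J, ⟨T, rfl⟩, hrad⟩ := hI
  rw [sVar_eq_sVar_iff.mpr hrad, compl_sVar_span]
  exact T.isCompact_biUnion fun a _ => isCompact_compl_sVar_span_singleton a

end SSpec

theorem isCompact_sZariski_dS_iff_sRadFinite_general {R : Type*} [CommRing R]
    (S : Set R)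
    (hS1 : (1 : R) ∈ S) (hSmul : ∀ s ∈ S, ∀ t ∈ S, s * t ∈ S)
    (I : Ideal R) :
    @IsCompact (SSpec S) (sZariskiTop S) (SVar S I)ᶜ ↔ SRadFinite S I := by
  let M : Submonoid R :=
    { carrier := S, mul_mem' := fun ha hb => hSmul _ ha _ hb, one_mem' := hS1 }
  exact ⟨SSpec.sRadFinite_of_isCompact_compl_sVar (M := M),
    SSpec.isCompact_compl_sVar_of_sRadFinite (M := M)⟩

/-- `D_S(I)` is quasi-compact with respect to the `S`-Zariski topology if and only if
`I` is `S`-radically finite. -/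
theorem isCompact_sZariski_dS_iff_sRadFinite {R : Type*} [CommRing R] [Nontrivial R]
    (S : Set R)
    (hS0 : (0 : R) ∉ S) (hS1 : (1 : R) ∈ S) (hSmul : ∀ s ∈ S, ∀ t ∈ S, s * t ∈ S)
    (I : Ideal R) :
    @IsCompact (SSpec S) (sZariskiTop S) (SVar S I)ᶜ ↔ SRadFinite S I :=
  isCompact_sZariski_dS_iff_sRadFinite_general S hS1 hSmul I
end

section
/- The following statements are equivalent: (1) Spec_S R is a noetherian topological space with respect to the S-Zariski topology; (2) every ideal of R is S-radically finite; (3) for every prime ideal P of R disjoint from S, P = √[S](I₀) for some finitely generated ideal I₀ of R with I₀ ⊆ P. -/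
/-!
Every `S`-prime `P` determines the prime `Q = {x | ∃ t ∈ S, t * x ∈ P}`, disjoint from `S`, and
`P ∈ V_S(I)` iff `I ⊆ Q`; since the prime ideals disjoint from `S` are themselves `S`-prime, this
gives `V_S(I) ⊆ V_S(J)` iff `J ⊆ √[S](I)`. So the open sets of `Spec_S R` correspond, in an
order-preserving way, to the `S`-radical ideals, and noetherianity is the ascending chain condition
on `S`-radical ideals; as finitely generated ideals are compact, this is equivalent to (2).
For (3) ⇒ (2), Zorn gives an ideal `P` maximal among those that are not `S`-radically finite,
and `P` is prime: if `a * b ∈ P` with `a, b ∉ P`, then `P + (a)` and `(P : a)` are `S`-radically finite, and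
`√[S](P) = √[S]((P + (a)) (P : a)) = √[S](P + (a)) ∩ √[S](P : a)`.
-/

namespace Ideal

variable {R : Type*} [CommRing R] (S : Submonoid R)

/-- `{x | ∃ s ∈ S, s * x ∈ I}`, realised as the contraction of the extension of `I` to `S⁻¹R`. -/
def sSaturation (I : Ideal R) : Ideal R :=
  (I.map (algebraMap R (Localization S))).comap (algebraMap R (Localization S))

def sRadical (I : Ideal R) : Ideal R :=
  (sSaturation S I).radical

variable {S} {I J P : Ideal R}

theorem mem_sSaturation {x : R} : x ∈ sSaturation S I ↔ ∃ s ∈ S, s * x ∈ I :=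
  IsLocalization.algebraMap_mem_map_algebraMap_iff S _ I x

theorem mem_sRadical {x : R} : x ∈ sRadical S I ↔ ∃ s ∈ S, ∃ n : ℕ, s * x ^ n ∈ I := by
  simp only [sRadical, mem_radical_iff, mem_sSaturation]
  exact ⟨fun ⟨n, s, hs, h⟩ => ⟨s, hs, n, h⟩, fun ⟨s, hs, n, h⟩ => ⟨n, s, hs, h⟩⟩

theorem coe_sRadical (I : Ideal R) : (sRadical S I : Set R) = SRad S I :=
  Set.ext fun _ => mem_sRadical

theorem sRadical_eq_comap_radical_map (I : Ideal R) :
    sRadical S I = (I.map (algebraMap R (Localization S))).radical.comap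
      (algebraMap R (Localization S)) :=
  (comap_radical _ _).symm

theorem le_sRadical (I : Ideal R) : I ≤ sRadical S I :=
  fun x hx => mem_sRadical.2 ⟨1, S.one_mem, 1, by simpa using hx⟩

theorem sRadical_mono : Monotone (sRadical S) :=
  fun _ _ h => radical_mono (comap_mono (map_mono h))

theorem sRadical_sRadical (I : Ideal R) : sRadical S (sRadical S I) = sRadical S I := by
  rw [sRadical_eq_comap_radical_map I, sRadical_eq_comap_radical_map,
    IsLocalization.map_under S, radical_idem]

theorem sRadical_le_sRadical_iff : sRadical S J ≤ sRadical S I ↔ J ≤ sRadical S I :=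
  ⟨(le_sRadical J).trans, fun h => (sRadical_mono h).trans_eq (sRadical_sRadical I)⟩

theorem sRadical_mul (I J : Ideal R) : sRadical S (I * J) = sRadical S I ⊓ sRadical S J := by
  simp only [sRadical_eq_comap_radical_map, Ideal.map_mul, radical_mul, comap_inf]

theorem sRadical_eq_top_of_mem {s : R} (hs : s ∈ S) (hsI : s ∈ I) : sRadical S I = ⊤ :=
  eq_top_iff.2 fun _ _ => mem_sRadical.2 ⟨s, hs, 0, by simpa using hsI⟩

theorem sSaturation_eq_self (hP : P.IsPrime) (hPS : Disjoint (S : Set R) P) :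
    sSaturation S P = P :=
  IsLocalization.under_map_of_isPrime_disjoint S _ hP hPS

theorem sRadical_eq_self (hP : P.IsPrime) (hPS : Disjoint (S : Set R) P) : sRadical S P = P := by
  rw [sRadical, sSaturation_eq_self hP hPS, hP.radical]

theorem sRadical_iSup {ι : Type*} [Nonempty ι] {f : ι → Ideal R} (hf : Directed (· ≤ ·) f) :
    sRadical S (⨆ i, f i) = ⨆ i, sRadical S (f i) := by
  refine le_antisymm (fun x hx => ?_) (iSup_le fun i => sRadical_mono (le_iSup f i))
  obtain ⟨s, hs, n, hx⟩ := mem_sRadical.1 hx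
  obtain ⟨i, hi⟩ := (Submodule.mem_iSup_of_directed f hf).1 hx
  exact mem_iSup_of_mem i (mem_sRadical.2 ⟨s, hs, n, hi⟩)

theorem exists_le_sRadical_of_directed {ι : Type*} [Nonempty ι] {f : ι → Ideal R}
    (hf : Directed (· ≤ ·) f) (hJ : J.FG) (h : J ≤ sRadical S (⨆ i, f i)) :
    ∃ i, J ≤ sRadical S (f i) := by
  rw [sRadical_iSup hf] at h
  obtain ⟨_, ⟨i, rfl⟩, hi⟩ :=
    (CompleteLattice.isCompactElement_iff_le_of_directed_sSup_le (k := J)).1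
      ((Submodule.fg_iff_compact J).1 hJ) _ (Set.range_nonempty _)
      (directedOn_range.2 (hf.mono_comp _ fun _ _ h => sRadical_mono h)) h
  exact ⟨i, hi⟩

theorem sRadical_eq_sRadical_sup_mul_colon (I : Ideal R) (a : R) :
    sRadical S I = sRadical S ((I ⊔ span {a}) * I.colon (span {a})) := by
  refine le_antisymm ?_ (sRadical_mono ?_)
  · calc sRadical S I = sRadical S (I * I) := by rw [sRadical_mul, inf_idem]
      _ ≤ _ := sRadical_mono (mul_mono le_sup_left le_colon)
  · rw [sup_mul]
    refine sup_le mul_le_left ?_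
    rw [mul_comm, mul_le]
    intro r hr x hx
    obtain ⟨c, rfl⟩ := mem_span_singleton'.1 hx
    simpa [mul_left_comm] using I.mul_mem_left c (mem_colon_span_singleton.1 hr)

end Ideal

section

open Ideal TopologicalSpace Topology

variable {R : Type*} [CommRing R] {S : Submonoid R} {I J P : Ideal R}

theorem sRadFinite_iff : SRadFinite S I ↔ ∃ J : Ideal R, J.FG ∧ sRadical S I = sRadical S J := by
  simp only [SRadFinite, ← coe_sRadical, SetLike.coe_set_eq]

theorem sRadFinite_congr (h : sRadical S I = sRadical S J) : SRadFinite S I ↔ SRadFinite S J := by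
  simp only [sRadFinite_iff, h]

theorem sRadFinite_sRadical (hJ : J.FG) : SRadFinite S (sRadical S J) :=
  sRadFinite_iff.2 ⟨J, hJ, sRadical_sRadical J⟩

theorem SRadFinite.exists_sRadical_eq_of_directed {ι : Type*} [Nonempty ι] {f : ι → Ideal R}
    (hf : Directed (· ≤ ·) f) (h : SRadFinite S (⨆ i, f i)) :
    ∃ i, sRadical S (f i) = sRadical S (⨆ i, f i) := by
  obtain ⟨J, hJ, e⟩ := sRadFinite_iff.1 h
  obtain ⟨i, hi⟩ := exists_le_sRadical_of_directed hf hJ (e.symm ▸ le_sRadical J)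
  refine ⟨i, le_antisymm (sRadical_mono (le_iSup f i)) ?_⟩
  rw [e]
  exact sRadical_le_sRadical_iff.2 hi

theorem SRadFinite.exists_fg_sRadical_eq_of_isPrime (h : SRadFinite S P) (hP : P.IsPrime)
    (hPS : Disjoint (S : Set R) P) : ∃ I₀ : Ideal R, I₀.FG ∧ I₀ ≤ P ∧ sRadical S I₀ = P := by
  obtain ⟨J, hJ, e⟩ := sRadFinite_iff.1 h
  rw [sRadical_eq_self hP hPS] at e
  exact ⟨J, hJ, e ▸ le_sRadical J, e.symm⟩

theorem SRadFinite.of_sup_span_singleton_of_colon {a : R} (h₁ : SRadFinite S (I ⊔ span {a}))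
    (h₂ : SRadFinite S (I.colon (span {a}))) : SRadFinite S I := by
  obtain ⟨J₁, hJ₁, e₁⟩ := sRadFinite_iff.1 h₁
  obtain ⟨J₂, hJ₂, e₂⟩ := sRadFinite_iff.1 h₂
  refine sRadFinite_iff.2 ⟨J₁ * J₂, hJ₁.mul hJ₂, ?_⟩
  rw [sRadical_eq_sRadical_sup_mul_colon I a, sRadical_mul, sRadical_mul, e₁, e₂]

theorem disjoint_of_not_sRadFinite (h : ¬SRadFinite S I) : Disjoint (S : Set R) I :=
  Set.disjoint_left.2 fun s hs hsI => h <| sRadFinite_iff.2 ⟨⊤, Module.Finite.fg_top, by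
    rw [sRadical_eq_top_of_mem hs hsI, sRadical_eq_top_of_mem hs Submodule.mem_top]⟩

theorem isPrime_of_maximal_not_sRadFinite (hP : Maximal (fun I => ¬SRadFinite S I) P) :
    P.IsPrime := by
  have hgt {Q : Ideal R} (hPQ : P < Q) : SRadFinite S Q := not_not.1 (hP.not_prop_of_gt hPQ)
  refine isPrime_iff.2 ⟨fun htop => ?_, fun {a b} hab => ?_⟩
  · exact hP.prop (htop ▸ sRadFinite_iff.2 ⟨⊤, Module.Finite.fg_top, rfl⟩)
  by_contra! hnot
  have haP : P < P ⊔ span {a} := SetLike.lt_iff_le_and_exists.2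
    ⟨le_sup_left, a, mem_sup_right (mem_span_singleton_self a), hnot.1⟩
  have hbP : P < P.colon (span {a}) := SetLike.lt_iff_le_and_exists.2
    ⟨le_colon, b, mem_colon_span_singleton.2 (by rwa [mul_comm]), hnot.2⟩
  exact hP.prop ((hgt haP).of_sup_span_singleton_of_colon (hgt hbP))

/-- The `S`-analogue of Cohen's theorem. -/
theorem forall_sRadFinite_of_forall_isPrime
    (h : ∀ P : Ideal R, P.IsPrime → Disjoint (S : Set R) P → SRadFinite S P) (I : Ideal R) :
    SRadFinite S I := by
  by_contra hI
  obtain ⟨P, -, hP⟩ := zorn_le_nonempty₀ {I : Ideal R | ¬SRadFinite (S : Set R) I}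
    (fun c hc hchain y hy => by
      have : Nonempty c := ⟨⟨y, hy⟩⟩
      refine ⟨sSup c, fun hfin => ?_, fun z hz => le_sSup hz⟩
      rw [sSup_eq_iSup'] at hfin
      obtain ⟨⟨m, hm⟩, e⟩ := hfin.exists_sRadical_eq_of_directed hchain.directedOn.directed_val
      exact hc hm ((sRadFinite_congr e).2 hfin)) I hI
  exact hP.prop (h P (isPrime_of_maximal_not_sRadFinite hP) (disjoint_of_not_sRadFinite hP.prop))

namespace SSpec

theorem notMem_of_mem (P : SSpec (S : Set R)) {s : R} (hs : s ∈ S) : s ∉ P.1 :=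
  fun h => Set.eq_empty_iff_forall_notMem.1 P.2.1 s ⟨h, hs⟩

theorem isPrime_sSaturation (P : SSpec (S : Set R)) : (sSaturation S P.1).IsPrime := by
  obtain ⟨-, s, hs, hP⟩ := P.2
  refine isPrime_iff.2 ⟨(ne_top_iff_one _).2 fun h1 => ?_, fun {x y} hxy => ?_⟩
  · obtain ⟨t, ht, h⟩ := mem_sSaturation.1 h1
    exact P.notMem_of_mem ht (by simpa using h)
  obtain ⟨t, ht, h⟩ := mem_sSaturation.1 hxy
  rcases hP (t * x) y (by rwa [mul_assoc]) with h | h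
  · exact Or.inl (mem_sSaturation.2 ⟨s * t, S.mul_mem hs ht, by rwa [mul_assoc]⟩)
  · exact Or.inr (mem_sSaturation.2 ⟨s, hs, h⟩)

theorem disjoint_sSaturation (P : SSpec (S : Set R)) :
    Disjoint (S : Set R) (sSaturation S P.1) :=
  Set.disjoint_left.2 fun u hu h => by
    obtain ⟨t, ht, htu⟩ := mem_sSaturation.1 h
    exact P.notMem_of_mem (S.mul_mem ht hu) htu

end SSpec

/-- The single element `s` witnessing that `P` is `S`-prime turns each `t * x ∈ P` (`t ∈ S`)
into `s * x ∈ P`. -/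
theorem mem_SVar_iff_le_sSaturation {P : SSpec (S : Set R)} :
    P ∈ SVar S I ↔ I ≤ sSaturation S P.1 := by
  obtain ⟨-, s, hs, hP⟩ := P.2
  refine ⟨fun ⟨t, ht, h⟩ x hx => mem_sSaturation.2 ⟨t, ht, h x hx⟩,
    fun h => ⟨s, hs, fun x hx => ?_⟩⟩
  obtain ⟨t, ht, htx⟩ := mem_sSaturation.1 (h hx)
  exact (hP t x htx).resolve_left (P.notMem_of_mem (S.mul_mem hs ht))

theorem SVar_subset_SVar_iff : SVar S I ⊆ SVar S J ↔ J ≤ sRadical S I := by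
  refine ⟨fun h => ?_, fun h P hP => ?_⟩
  · by_contra hJ
    obtain ⟨a, haJ, ha⟩ := SetLike.not_le_iff_exists.1 hJ
    have hIa : Disjoint (I : Set R) (S ⊔ Submonoid.powers a : Submonoid R) :=
      Set.disjoint_left.2 fun x hxI hx => by
        obtain ⟨s, hs, _, ⟨n, rfl⟩, rfl⟩ := Submonoid.mem_sup.1 hx
        exact ha (mem_sRadical.2 ⟨s, hs, n, hxI⟩)
    obtain ⟨Q, hQ, hIQ, hQa⟩ := exists_le_prime_disjoint I _ hIa
    have hQS : Disjoint (S : Set R) Q := hQa.symm.mono_left (SetLike.coe_mono le_sup_left)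
    let P : SSpec (S : Set R) := ⟨Q, Set.disjoint_iff_inter_eq_empty.1 hQS.symm, 1, S.one_mem,
      fun a b hab => by simpa using hQ.mem_or_mem hab⟩
    have hPJ := h (mem_SVar_iff_le_sSaturation.2 ((sSaturation_eq_self hQ hQS).symm ▸ hIQ) :
      P ∈ SVar S I)
    rw [mem_SVar_iff_le_sSaturation, sSaturation_eq_self hQ hQS] at hPJ
    exact Set.disjoint_left.1 hQa (hPJ haJ) (Submonoid.mem_sup_right (Submonoid.mem_powers a))
  · rw [mem_SVar_iff_le_sSaturation] at hP ⊢
    calc J ≤ sRadical S I := h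
      _ ≤ sRadical S (sSaturation S P.1) := sRadical_mono hP
      _ = sSaturation S P.1 := sRadical_eq_self P.isPrime_sSaturation P.disjoint_sSaturation

theorem SVar_top : SVar S (⊤ : Ideal R) = ∅ :=
  Set.eq_empty_iff_forall_notMem.2 fun P hP =>
    P.isPrime_sSaturation.ne_top (top_le_iff.1 (mem_SVar_iff_le_sSaturation.1 hP))

theorem SVar_mul (I J : Ideal R) : SVar S (I * J) = SVar S I ∪ SVar S J := by
  ext P
  simp only [Set.mem_union, mem_SVar_iff_le_sSaturation]
  exact P.isPrime_sSaturation.mul_le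

theorem SVar_iSup {ι : Sort*} (f : ι → Ideal R) : SVar S (⨆ i, f i) = ⋂ i, SVar S (f i) := by
  ext P
  simp only [Set.mem_iInter, mem_SVar_iff_le_sSaturation, iSup_le_iff]

theorem isOpen_sZariskiTop_iff {U : Set (SSpec (S : Set R))} :
    IsOpen[sZariskiTop (S : Set R)] U ↔ ∃ I : Ideal R, U = (SVar S I)ᶜ := by
  refine ⟨fun hU => ?_, fun ⟨I, hI⟩ => .basic _ ⟨I, hI⟩⟩
  induction hU with
  | basic U hU => exact hU
  | univ => exact ⟨⊤, by rw [SVar_top, Set.compl_empty]⟩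
  | inter U V _ _ hU hV =>
    obtain ⟨I, rfl⟩ := hU
    obtain ⟨J, rfl⟩ := hV
    exact ⟨I * J, by rw [SVar_mul, Set.compl_union]⟩
  | sUnion 𝒰 _ h𝒰 =>
    choose I hI using h𝒰
    refine ⟨⨆ U : 𝒰, I U U.2, ?_⟩
    rw [SVar_iSup, Set.compl_iInter, Set.sUnion_eq_iUnion]
    exact Set.iUnion_congr fun U => hI U U.2

section NoetherianSpace

attribute [local instance] sZariskiTop

theorem forall_sRadFinite_of_noetherianSpace [NoetherianSpace (SSpec (S : Set R))]
    (I : Ideal R) : SRadFinite S I := by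
  let D : Ideal R → Opens (SSpec (S : Set R)) := fun J =>
    ⟨(SVar S J)ᶜ, isOpen_sZariskiTop_iff.2 ⟨J, rfl⟩⟩
  have hD {J K : Ideal R} : D J ≤ D K ↔ J ≤ sRadical S K := by
    rw [← SetLike.coe_subset_coe, Opens.coe_mk, Opens.coe_mk, Set.compl_subset_compl,
      SVar_subset_SVar_iff]
  obtain ⟨_, ⟨J, ⟨hJ, hJI⟩, rfl⟩, hmax⟩ := wellFounded_gt.has_min (D '' {J | J.FG ∧ J ≤ I})
    ⟨_, Set.mem_image_of_mem D ⟨Submodule.fg_bot, bot_le⟩⟩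
  have hIJ : I ≤ sRadical S J := fun a ha => by
    have hJa : J ⊔ span {a} ∈ {J | J.FG ∧ J ≤ I} :=
      ⟨Submodule.FG.sup hJ (Submodule.fg_span_singleton a),
        sup_le hJI ((span_singleton_le_iff_mem _).2 ha)⟩
    have hle : D J ≤ D (J ⊔ span {a}) := hD.2 (le_sup_left.trans (le_sRadical _))
    have heq := eq_of_le_of_not_lt hle (hmax _ (Set.mem_image_of_mem D hJa))
    exact hD.1 heq.ge (mem_sup_right (mem_span_singleton_self a))
  exact sRadFinite_iff.2 ⟨J, hJ, le_antisymm (sRadical_le_sRadical_iff.2 hIJ) (sRadical_mono hJI)⟩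

theorem noetherianSpace_of_forall_sRadFinite (h : ∀ I : Ideal R, SRadFinite S I) :
    NoetherianSpace (SSpec (S : Set R)) := by
  refine wellFoundedGT_iff_monotone_chain_condition.2 fun U => ?_
  choose I hI using fun n => isOpen_sZariskiTop_iff.1 (U n).isOpen
  have hU {m n : ℕ} : U m ≤ U n ↔ I m ≤ sRadical S (I n) := by
    rw [← SetLike.coe_subset_coe, hI, hI, Set.compl_subset_compl, SVar_subset_SVar_iff]
  have hmono : Monotone fun n => sRadical S (I n) := fun m n hmn =>
    sRadical_le_sRadical_iff.2 (hU.1 (U.monotone hmn))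
  obtain ⟨N, hN⟩ := (h _).exists_sRadical_eq_of_directed hmono.directed_le
  refine ⟨N, fun m hm => le_antisymm (U.monotone hm) (hU.2 ?_)⟩
  calc I m ≤ sRadical S (⨆ k, sRadical S (I k)) :=
        (le_sRadical _).trans (le_iSup (fun k => sRadical S (I k)) m |>.trans (le_sRadical _))
    _ = sRadical S (I N) := by rw [← hN, sRadical_sRadical]

end NoetherianSpace

end

theorem sZariski_noetherian_tfae_general {R : Type*} [CommRing R] (S : Set R)
    (hS1 : (1 : R) ∈ S) (hSmul : ∀ s ∈ S, ∀ t ∈ S, s * t ∈ S) :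
    List.TFAE
      [@TopologicalSpace.NoetherianSpace (SSpec S) (sZariskiTop S),
       ∀ I : Ideal R, SRadFinite S I,
       ∀ P : Ideal R, P.IsPrime → (P : Set R) ∩ S = ∅ →
         ∃ I₀ : Ideal R, I₀.FG ∧ I₀ ≤ P ∧ (P : Set R) = SRad S I₀] := by
  let M : Submonoid R :=
    { carrier := S, mul_mem' := fun ha hb => hSmul _ ha _ hb, one_mem' := hS1 }
  have hdisj (P : Ideal R) : (P : Set R) ∩ S = ∅ ↔ Disjoint (M : Set R) P :=
    Set.disjoint_iff_inter_eq_empty.symm.trans disjoint_comm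
  have hrad (I : Ideal R) : SRad S I = Ideal.sRadical M I := (Ideal.coe_sRadical (S := M) I).symm
  tfae_have 1 → 2 := fun _ => forall_sRadFinite_of_noetherianSpace (S := M)
  tfae_have 2 → 1 := noetherianSpace_of_forall_sRadFinite (S := M)
  tfae_have 2 → 3 := fun h P hP hPS => by
    obtain ⟨I₀, hI₀, hle, e⟩ :=
      (h P).exists_fg_sRadical_eq_of_isPrime (S := M) hP ((hdisj P).1 hPS)
    exact ⟨I₀, hI₀, hle, by rw [hrad, e]⟩
  tfae_have 3 → 2 := fun h => forall_sRadFinite_of_forall_isPrime (S := M) fun P hP hPS => by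
    obtain ⟨I₀, hI₀, -, e⟩ := h P hP ((hdisj P).2 hPS)
    rw [hrad, SetLike.coe_set_eq] at e
    exact e ▸ sRadFinite_sRadical hI₀
  tfae_finish

/-- TFAE: (1) `Spec_S R` is noetherian for the `S`-Zariski topology;
(2) every ideal of `R` is `S`-radically finite;
(3) every prime `P` disjoint from `S` satisfies `P = √[S](I₀)` for some finitely
generated ideal `I₀ ⊆ P`. -/
theorem sZariski_noetherian_tfae {R : Type*} [CommRing R] [Nontrivial R] (S : Set R)
    (hS0 : (0 : R) ∉ S) (hS1 : (1 : R) ∈ S) (hSmul : ∀ s ∈ S, ∀ t ∈ S, s * t ∈ S) :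
    List.TFAE
      [@TopologicalSpace.NoetherianSpace (SSpec S) (sZariskiTop S),
       ∀ I : Ideal R, SRadFinite S I,
       ∀ P : Ideal R, P.IsPrime → (P : Set R) ∩ S = ∅ →
         ∃ I₀ : Ideal R, I₀.FG ∧ I₀ ≤ P ∧ (P : Set R) = SRad S I₀] :=
  sZariski_noetherian_tfae_general S hS1 hSmul
end

section
/- If P is an S-prime ideal of R, then there exists s_P ∈ S such that the ideal quotient (P : s_P) = {a ∈ R : s_P·a ∈ P} is a prime ideal of R; moreover, if s_P' ∈ S is any other element of S such that (P : s_P') is a prime ideal, then (P : s_P) = (P : s_P'). -/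
/-- For an `S`-prime ideal `P` there is `s_P ∈ S` such that `(P : s_P)` is a prime ideal;
moreover, for any other `s_P' ∈ S` with `(P : s_P')` prime, `(P : s_P) = (P : s_P')`. -/
theorem exists_colon_prime_of_isSPrime {R : Type*} [CommRing R] [Nontrivial R] (S : Set R)
    (hS0 : (0 : R) ∉ S) (hS1 : (1 : R) ∈ S) (hSmul : ∀ s ∈ S, ∀ t ∈ S, s * t ∈ S)
    (P : Ideal R) (hP : IsSPrime S P) :
    ∃ s ∈ S, (P.colon (Ideal.span {s})).IsPrime ∧
      ∀ s' ∈ S, (P.colon (Ideal.span {s'})).IsPrime →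
        P.colon (Ideal.span {s}) = P.colon (Ideal.span {s'}) := by
  obtain ⟨hdisj, s, hsS, hs⟩ := hP
  have hnp : ∀ x ∈ S, x ∉ P := fun x hx hxP =>
    Set.eq_empty_iff_forall_notMem.mp hdisj x ⟨hxP, hx⟩
  have hmem : ∀ (t a : R), a ∈ P.colon (Ideal.span {t}) ↔ t * a ∈ P := by
    intro t a
    rw [Ideal.mem_colon_span_singleton, mul_comm]
  refine ⟨s, hsS, ?hprime, ?huniq⟩
  case hprime =>
    constructor
    · rw [Ideal.ne_top_iff_one, hmem, mul_one]
      exact hnp s hsS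
    · intro a b hab
      rw [hmem] at hab
      rw [hmem, hmem]
      have h1 : a * (b * s) ∈ P := by
        have : a * (b * s) = s * (a * b) := by ring
        rw [this]; exact hab
      rcases hs a (b * s) h1 with h | h
      · exact Or.inl h
      · have h2 : b * (s * s) ∈ P := by
          have : b * (s * s) = s * (b * s) := by ring
          rw [this]; exact h
        rcases hs b (s * s) h2 with h3 | h3
        · exact Or.inr h3
        · exact absurd h3 (hnp _ (hSmul s hsS _ (hSmul s hsS s hsS)))
  case huniq =>
    intro s' hs'S hprime'
    ext a
    rw [hmem, hmem]
    constructor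
    · intro h
      have h1 : s * a ∈ P.colon (Ideal.span {s'}) := by
        rw [hmem]
        exact Ideal.mul_mem_left P s' h
      rcases hprime'.mem_or_mem h1 with h2 | h2
      · rw [hmem] at h2
        exact absurd h2 (hnp _ (hSmul s' hs'S s hsS))
      · rwa [hmem] at h2
    · intro h
      rcases hs s' a h with h2 | h2
      · exact absurd h2 (hnp _ (hSmul s hsS s' hs'S))
      · exact h2
end

section
/- The map Spec_S R → Spec R sending an S-prime ideal P to the prime ideal (P : s_P), where s_P ∈ S is chosen so that (P : s_P) is prime, is continuous when Spec_S R carries the S-flat topology and Spec R carries the flat topology (the topology on Spec R with open sub-basis the sets V(f) = {p ∈ Spec R : f ∈ p}, f ∈ R). Indeed, for every a ∈ R, the preimage of V(a) under this map equals V_S(a). -/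
/-- The flat topology on `Spec R`: the coarsest topology in which every
`V(f) = {p | f ∈ p}`, `f ∈ R`, is open. -/
def flatTop (R : Type*) [CommRing R] : TopologicalSpace (PrimeSpectrum R) :=
  TopologicalSpace.generateFrom {U | ∃ f : R, U = {p : PrimeSpectrum R | f ∈ p.asIdeal}}

/-- The map `Spec_S R → Spec R`, `P ↦ (P : s_P)` (with `s_P ∈ S` chosen so that
`(P : s_P)` is prime), is continuous for the `S`-flat topology on `Spec_S R` and the
flat topology on `Spec R`; indeed, for every `a ∈ R` the preimage of `V(a)`
equals `V_S(a)`. -/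
theorem continuous_colonMap_sFlat_flat {R : Type*} [CommRing R] [Nontrivial R] (S : Set R)
    (hS0 : (0 : R) ∉ S) (hS1 : (1 : R) ∈ S) (hSmul : ∀ s ∈ S, ∀ t ∈ S, s * t ∈ S)
    (g : SSpec S → PrimeSpectrum R)
    (hg : ∀ P : SSpec S, ∃ s ∈ S, (g P).asIdeal = P.1.colon (Ideal.span {s})) :
    @Continuous (SSpec S) (PrimeSpectrum R) (sFlatTop S) (flatTop R) g ∧
      ∀ a : R, g ⁻¹' {p : PrimeSpectrum R | a ∈ p.asIdeal} = SVar S (Ideal.span {a}) := by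
  have key : ∀ a : R, g ⁻¹' {p : PrimeSpectrum R | a ∈ p.asIdeal} = SVar S (Ideal.span {a}) := by
    intro a
    ext P
    obtain ⟨s, hsS, hgs⟩ := hg P
    simp only [Set.mem_preimage, Set.mem_setOf_eq, SVar]
    constructor
    · intro ha
      rw [hgs, Ideal.mem_colon_span_singleton] at ha
      refine ⟨s, hsS, fun x hx => ?_⟩
      obtain ⟨c, rfl⟩ := Ideal.mem_span_singleton'.mp hx
      have h1 : s * (c * a) = c * (a * s) := by ring
      rw [h1]
      exact P.1.mul_mem_left c ha
    · rintro ⟨t, htS, ht⟩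
      have hta : t * a ∈ P.1 := ht a (Ideal.mem_span_singleton_self a)
      have htQ : t ∉ (g P).asIdeal := by
        rw [hgs, Ideal.mem_colon_span_singleton]
        intro h
        have hts : t * s ∈ S := hSmul t htS s hsS
        have hne : ((P.1 : Set R) ∩ S).Nonempty := ⟨t * s, h, hts⟩
        rw [P.2.1] at hne
        exact Set.not_nonempty_empty hne
      have htaQ : t * a ∈ (g P).asIdeal := by
        rw [hgs, Ideal.mem_colon_span_singleton]
        exact P.1.mul_mem_right s hta
      rcases (g P).isPrime.mem_or_mem htaQ with h | h
      · exact absurd h htQ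
      · exact h
  refine ⟨?_, key⟩
  apply continuous_generateFrom_iff.mpr
  rintro U ⟨f, rfl⟩
  rw [key f]
  exact TopologicalSpace.isOpen_generateFrom_of_mem ⟨f, rfl⟩
end

section
/- Let φ : R → R' be a ring homomorphism of commutative rings such that 0 ∉ φ(S). Then φ(S) is a multiplicatively closed subset of R', and the induced map φ_S : Spec_{φ(S)} R' → Spec_S R sending P' to φ⁻¹(P') is continuous when Spec_{φ(S)} R' carries the φ(S)-flat topology and Spec_S R carries the S-flat topology; indeed, for every finitely generated ideal I of R, φ_S⁻¹(V_S(I)) = V_{φ(S)}(φ(I)R'). -/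
section

variable {R R' : Type*} [CommRing R] [CommRing R']

-- The `y` with `s * y ∈ P` form the ideal `P : s`, so it suffices to test the generators `φ x`.
theorem Ideal.mul_mem_of_mem_map {φ : R →+* R'} {I : Ideal R} {P : Ideal R'} {s : R'}
    (h : ∀ x ∈ I, s * φ x ∈ P) {y : R'} (hy : y ∈ I.map φ) : s * y ∈ P := by
  have hle : I.map φ ≤ P.colon (Ideal.span {s}) := by
    refine Ideal.map_le_iff_le_comap.mpr fun x hx => ?_
    rw [Ideal.mem_comap, Ideal.mem_colon_span_singleton, mul_comm]
    exact h x hx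
  rw [mul_comm]
  exact Ideal.mem_colon_span_singleton.mp (hle hy)

theorem IsSPrime.comap {S : Set R} (φ : R →+* R') {P : Ideal R'} (hP : IsSPrime (φ '' S) P) :
    IsSPrime S (P.comap φ) := by
  obtain ⟨hdisj, _, ⟨s, hs, rfl⟩, hprime⟩ := hP
  refine ⟨Set.eq_empty_of_forall_notMem fun a ⟨haP, haS⟩ => ?_, s, hs, fun a b hab => ?_⟩
  · exact hdisj.subset ⟨haP, a, haS, rfl⟩
  · simpa only [Ideal.mem_comap, map_mul] using hprime (φ a) (φ b) (by simpa using hab)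

def SSpec.comap {S : Set R} (φ : R →+* R') (P : SSpec (φ '' S)) : SSpec S :=
  ⟨P.1.comap φ, P.2.comap φ⟩

@[simp]
theorem SSpec.comap_val {S : Set R} (φ : R →+* R') (P : SSpec (φ '' S)) :
    (SSpec.comap φ P).1 = P.1.comap φ :=
  rfl

theorem SSpec.comap_preimage_sVar (S : Set R) (φ : R →+* R') (I : Ideal R) :
    SSpec.comap φ ⁻¹' SVar S I = SVar (φ '' S) (I.map φ) := by
  ext P
  constructor
  · rintro ⟨s, hs, h⟩
    refine ⟨φ s, ⟨s, hs, rfl⟩, fun y hy => Ideal.mul_mem_of_mem_map (fun x hx => ?_) hy⟩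
    simpa only [SSpec.comap_val, Ideal.mem_comap, map_mul] using h x hx
  · rintro ⟨_, ⟨s, hs, rfl⟩, h⟩
    refine ⟨s, hs, fun x hx => ?_⟩
    simpa only [SSpec.comap_val, Ideal.mem_comap, map_mul] using
      h (φ x) (Ideal.mem_map_of_mem φ hx)

theorem SSpec.continuous_comap_sFlat (S : Set R) (φ : R →+* R') :
    @Continuous _ _ (sFlatTop (φ '' S)) (sFlatTop S) (SSpec.comap φ) := by
  refine continuous_generateFrom_iff.mpr ?_
  rintro _ ⟨f, rfl⟩
  rw [SSpec.comap_preimage_sVar, Ideal.map_span, Set.image_singleton]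
  exact TopologicalSpace.GenerateOpen.basic _ ⟨φ f, rfl⟩

end

theorem comap_continuous_sFlat_general {R R' : Type*} [CommRing R] [CommRing R'] (S : Set R)
    (hS1 : (1 : R) ∈ S) (hSmul : ∀ s ∈ S, ∀ t ∈ S, s * t ∈ S)
    (φ : R →+* R') (hφ : (0 : R') ∉ φ '' S) :
    ((0 : R') ∉ φ '' S ∧ (1 : R') ∈ φ '' S ∧
        ∀ s ∈ φ '' S, ∀ t ∈ φ '' S, s * t ∈ φ '' S) ∧
      ∃ g : SSpec (φ '' S) → SSpec S,
        (∀ P' : SSpec (φ '' S), (g P').1 = Ideal.comap φ P'.1) ∧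
        @Continuous (SSpec (φ '' S)) (SSpec S) (sFlatTop (φ '' S)) (sFlatTop S) g ∧
        ∀ I : Ideal R, I.FG →
          g ⁻¹' (SVar S I) = SVar (φ '' S) (Ideal.map φ I) := by
  have himage_mul : ∀ s ∈ φ '' S, ∀ t ∈ φ '' S, s * t ∈ φ '' S := by
    rintro _ ⟨s, hs, rfl⟩ _ ⟨t, ht, rfl⟩
    exact ⟨s * t, hSmul s hs t ht, map_mul φ s t⟩
  exact ⟨⟨hφ, ⟨1, hS1, map_one φ⟩, himage_mul⟩, SSpec.comap φ, SSpec.comap_val φ,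
    SSpec.continuous_comap_sFlat S φ, fun I _ => SSpec.comap_preimage_sVar S φ I⟩

/-- For a ring homomorphism `φ : R → R'` with `0 ∉ φ(S)`: `φ(S)` is a multiplicatively
closed subset of `R'`, and the induced map `φ_S : Spec_{φ(S)} R' → Spec_S R`,
`P' ↦ φ⁻¹(P')`, is continuous for the `φ(S)`-flat and `S`-flat topologies; indeed, for
every finitely generated ideal `I` of `R`, `φ_S⁻¹(V_S(I)) = V_{φ(S)}(φ(I)R')`. -/
theorem comap_continuous_sFlat {R R' : Type*} [CommRing R] [Nontrivial R] [CommRing R']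
    [Nontrivial R'] (S : Set R)
    (hS0 : (0 : R) ∉ S) (hS1 : (1 : R) ∈ S) (hSmul : ∀ s ∈ S, ∀ t ∈ S, s * t ∈ S)
    (φ : R →+* R') (hφ : (0 : R') ∉ φ '' S) :
    ((0 : R') ∉ φ '' S ∧ (1 : R') ∈ φ '' S ∧
        ∀ s ∈ φ '' S, ∀ t ∈ φ '' S, s * t ∈ φ '' S) ∧
      ∃ g : SSpec (φ '' S) → SSpec S,
        (∀ P' : SSpec (φ '' S), (g P').1 = Ideal.comap φ P'.1) ∧
        @Continuous (SSpec (φ '' S)) (SSpec S) (sFlatTop (φ '' S)) (sFlatTop S) g ∧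
        ∀ I : Ideal R, I.FG →
          g ⁻¹' (SVar S I) = SVar (φ '' S) (Ideal.map φ I) :=
  comap_continuous_sFlat_general S hS1 hSmul φ hφ
end

section
/- For every ideal I of R, the set V_S(I) is a quasi-compact subset of Spec_S R with respect to the S-flat topology; that is, every closed subset of Spec_S R with respect to the S-Zariski topology is quasi-compact with respect to the S-flat topology. -/
/-!
The ultrafilter criterion. Given an ultrafilter `𝒰` containing `V_S(I)`, let `F` be the set of
`f` with `V_S(f) ∉ 𝒰`. On `S`-primes `V_S(fg) = V_S(f) ∪ V_S(g)` and `V_S(s) = ∅` for `s ∈ S`,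
so `F` is a multiplicative set containing `S`, and `F` misses `I` because `V_S(I) ⊆ V_S(f)`
for `f ∈ I`. A prime `p ⊇ I` avoiding `F` is then an `S`-prime in `V_S(I)`, and every basic
open `V_S(f)` containing it lies in `𝒰`, so `𝒰` converges to `p`.
-/

open Filter

section

variable {R : Type*} [CommRing R] {S : Set R}

lemma sVar_antitone {I J : Ideal R} (h : I ≤ J) : SVar S J ⊆ SVar S I :=
  fun _ ⟨s, hs, hJ⟩ => ⟨s, hs, fun x hx => hJ x (h hx)⟩

lemma mem_sVar_span_singleton {f : R} {P : SSpec S} :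
    P ∈ SVar S (Ideal.span {f}) ↔ ∃ s ∈ S, s * f ∈ P.1 := by
  refine ⟨fun ⟨s, hs, h⟩ => ⟨s, hs, h f (Ideal.mem_span_singleton_self f)⟩, ?_⟩
  rintro ⟨s, hs, hsf⟩
  refine ⟨s, hs, fun x hx => ?_⟩
  obtain ⟨c, rfl⟩ := Ideal.mem_span_singleton'.mp hx
  simpa [mul_left_comm] using P.1.mul_mem_left c hsf

lemma IsSPrime.notMem_of_mem {P : Ideal R} (hP : IsSPrime S P) {s : R} (hs : s ∈ S) : s ∉ P :=
  fun hsP => (Set.eq_empty_iff_forall_notMem.mp hP.1) s ⟨hsP, hs⟩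

lemma IsSPrime.of_isPrime {P : Ideal R} (hP : P.IsPrime) (hS1 : (1 : R) ∈ S)
    (hPS : Disjoint (P : Set R) S) : IsSPrime S P :=
  ⟨hPS.eq_bot, 1, hS1, fun a b hab => by simpa using hP.mem_or_mem hab⟩

lemma sVar_span_singleton_eq_empty (hSmul : ∀ s ∈ S, ∀ t ∈ S, s * t ∈ S) {s : R} (hs : s ∈ S) :
    SVar S (Ideal.span {s}) = ∅ :=
  Set.eq_empty_of_forall_notMem fun P hP => by
    obtain ⟨t, ht, hts⟩ := mem_sVar_span_singleton.mp hP
    exact P.2.notMem_of_mem (hSmul t ht s hs) hts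

lemma sVar_span_singleton_mul (hSmul : ∀ s ∈ S, ∀ t ∈ S, s * t ∈ S) (f g : R) :
    SVar S (Ideal.span {f * g}) = SVar S (Ideal.span {f}) ∪ SVar S (Ideal.span {g}) := by
  ext P
  simp only [Set.mem_union, mem_sVar_span_singleton]
  constructor
  · rintro ⟨t, ht, htfg⟩
    obtain ⟨s, hs, hprime⟩ := P.2.2
    rcases hprime (t * f) g (by rwa [← mul_assoc] at htfg) with h | h
    · exact Or.inl ⟨s * t, hSmul s hs t ht, by rwa [mul_assoc]⟩
    · exact Or.inr ⟨s, hs, h⟩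
  · rintro (⟨t, ht, htf⟩ | ⟨t, ht, htg⟩)
    · exact ⟨t, ht, by simpa [mul_assoc] using P.1.mul_mem_right g htf⟩
    · exact ⟨t, ht, by simpa [mul_left_comm] using P.1.mul_mem_left f htg⟩

def sVarNotMemSubmonoid (hS1 : (1 : R) ∈ S) (hSmul : ∀ s ∈ S, ∀ t ∈ S, s * t ∈ S)
    (𝒰 : Ultrafilter (SSpec S)) : Submonoid R where
  carrier := {f | SVar S (Ideal.span {f}) ∉ 𝒰}
  one_mem' := by
    simpa only [Set.mem_ofPred_eq, sVar_span_singleton_eq_empty hSmul hS1] using 𝒰.empty_notMem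
  mul_mem' {f g} hf hg := by
    simp only [Set.mem_ofPred_eq, sVar_span_singleton_mul hSmul, Ultrafilter.union_mem_iff]
    exact not_or.mpr ⟨hf, hg⟩

section

variable {hS1 : (1 : R) ∈ S} {hSmul : ∀ s ∈ S, ∀ t ∈ S, s * t ∈ S} {𝒰 : Ultrafilter (SSpec S)}

lemma subset_sVarNotMemSubmonoid : S ⊆ sVarNotMemSubmonoid hS1 hSmul 𝒰 := fun s hs =>
  show SVar S (Ideal.span {s}) ∉ 𝒰 by
    rw [sVar_span_singleton_eq_empty hSmul hs]; exact 𝒰.empty_notMem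

lemma disjoint_sVarNotMemSubmonoid {I : Ideal R} (hI : SVar S I ∈ 𝒰) :
    Disjoint (I : Set R) (sVarNotMemSubmonoid hS1 hSmul 𝒰) :=
  Set.disjoint_left.mpr fun _ hfI hf =>
    hf (𝒰.mem_of_superset hI (sVar_antitone ((Ideal.span_singleton_le_iff_mem I).mpr hfI)))

end

end

theorem isCompact_sVar_sFlat_general {R : Type*} [CommRing R] (S : Set R)
    (hS1 : (1 : R) ∈ S) (hSmul : ∀ s ∈ S, ∀ t ∈ S, s * t ∈ S)
    (I : Ideal R) :
    @IsCompact (SSpec S) (sFlatTop S) (SVar S I) := by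
  let _ : TopologicalSpace (SSpec S) := sFlatTop S
  refine isCompact_iff_ultrafilter_le_nhds.mpr fun 𝒰 h𝒰 => ?_
  have hI : SVar S I ∈ 𝒰 := le_principal_iff.mp h𝒰
  obtain ⟨p, hp, hIp, hpF⟩ := Ideal.exists_le_prime_disjoint I
    (sVarNotMemSubmonoid hS1 hSmul 𝒰) (disjoint_sVarNotMemSubmonoid hI)
  let P : SSpec S := ⟨p, .of_isPrime hp hS1 (hpF.mono_right subset_sVarNotMemSubmonoid)⟩
  refine ⟨P, ⟨1, hS1, fun x hx => by simpa using hIp hx⟩, ?_⟩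
  refine tendsto_id'.mp (TopologicalSpace.tendsto_nhds_generateFrom_iff.mpr ?_)
  rintro _ ⟨f, rfl⟩ hPf
  obtain ⟨s, hs, hsf⟩ := mem_sVar_span_singleton.mp hPf
  have hsf𝒰 : SVar S (Ideal.span {s * f}) ∈ 𝒰 :=
    not_not.mp fun h => Set.disjoint_left.mp hpF hsf h
  simpa [sVar_span_singleton_mul hSmul, sVar_span_singleton_eq_empty hSmul hs] using hsf𝒰

/-- Every `V_S(I)` (i.e. every `S`-Zariski closed subset of `Spec_S R`) is quasi-compact
with respect to the `S`-flat topology. -/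
theorem isCompact_sVar_sFlat {R : Type*} [CommRing R] [Nontrivial R] (S : Set R)
    (hS0 : (0 : R) ∉ S) (hS1 : (1 : R) ∈ S) (hSmul : ∀ s ∈ S, ∀ t ∈ S, s * t ∈ S)
    (I : Ideal R) :
    @IsCompact (SSpec S) (sFlatTop S) (SVar S I) :=
  isCompact_sVar_sFlat_general S hS1 hSmul I
end

section
/- For every P ∈ Spec_S R, the closure Λ(P) of the singleton {P} with respect to the S-flat topology equals {Q ∈ Spec_S R : sQ ⊆ P for some s ∈ S}. -/
/-- For `P ∈ Spec_S R`, the closure of `{P}` in the `S`-flat topology is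
`Λ(P) = {Q ∈ Spec_S R | sQ ⊆ P for some s ∈ S}`. -/
theorem sFlat_closure_singleton {R : Type*} [CommRing R] [Nontrivial R] (S : Set R)
    (hS0 : (0 : R) ∉ S) (hS1 : (1 : R) ∈ S) (hSmul : ∀ s ∈ S, ∀ t ∈ S, s * t ∈ S)
    (P : SSpec S) :
    @closure (SSpec S) (sFlatTop S) {P} =
      {Q : SSpec S | ∃ s ∈ S, ∀ x ∈ Q.1, s * x ∈ P.1} := by
  letI := sFlatTop S
  ext Q
  simp only [Set.mem_setOf_eq]
  constructor
  · intro hQ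
    obtain ⟨hdisj, s, hs, hsprime⟩ := P.2
    refine ⟨s, hs, fun x hx => ?_⟩
    have hopen : IsOpen (SVar S (Ideal.span {x})) :=
      TopologicalSpace.GenerateOpen.basic _ ⟨x, rfl⟩
    have hQmem : Q ∈ SVar S (Ideal.span {x}) :=
      ⟨1, hS1, fun y hy => by
        rw [one_mul]
        exact Ideal.span_le.mpr (Set.singleton_subset_iff.mpr hx) hy⟩
    obtain ⟨z, hz1, hz2⟩ := (mem_closure_iff.mp hQ) _ hopen hQmem
    rw [Set.mem_singleton_iff] at hz2
    rw [hz2] at hz1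
    obtain ⟨u, hu, hP⟩ := hz1
    have hux : u * x ∈ P.1 := hP x (Ideal.mem_span_singleton_self x)
    rcases hsprime u x hux with h | h
    · exact absurd ⟨h, hSmul s hs u hu⟩
        (Set.eq_empty_iff_forall_notMem.mp hdisj (s * u))
    · exact h
  · rintro ⟨s, hs, hsub⟩
    rw [mem_closure_iff]
    intro o ho hQo
    refine ⟨P, ?_, rfl⟩
    have ho' : TopologicalSpace.GenerateOpen
        {U | ∃ f : R, U = SVar S (Ideal.span {f})} o := ho
    clear ho
    induction ho' with
    | basic U hU =>
      obtain ⟨f, rfl⟩ := hU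
      obtain ⟨t, ht, hQf⟩ := hQo
      exact ⟨s * t, hSmul s hs t ht, fun y hy => by
        rw [mul_assoc]; exact hsub _ (hQf y hy)⟩
    | univ => trivial
    | inter U V _ _ ihU ihV => exact ⟨ihU hQo.1, ihV hQo.2⟩
    | sUnion K _ ih =>
      obtain ⟨u, hu, hQu⟩ := hQo
      exact ⟨u, hu, ih u hu hQu⟩
end

section
/- Every nonempty irreducible closed subset F of Spec_S R with respect to the S-flat topology has a generic point; that is, there exists P ∈ F such that F = Λ(P), the closure of {P} in the S-flat topology. -/
/-- Every (nonempty) irreducible closed subset of `Spec_S R` with respect to the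
`S`-flat topology has a generic point. -/
theorem sFlat_irreducible_closed_has_generic_point {R : Type*} [CommRing R] [Nontrivial R]
    (S : Set R)
    (hS0 : (0 : R) ∉ S) (hS1 : (1 : R) ∈ S) (hSmul : ∀ s ∈ S, ∀ t ∈ S, s * t ∈ S)
    (F : Set (SSpec S))
    (hirr : @IsIrreducible (SSpec S) (sFlatTop S) F)
    (hcl : @IsClosed (SSpec S) (sFlatTop S) F) :
    ∃ P ∈ F, F = @closure (SSpec S) (sFlatTop S) {P} := by
  classical
  letI := sFlatTop S
  have hpre : IsPreirreducible F := hirr.2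
  have hopenV : ∀ f : R, IsOpen (SVar S (Ideal.span {f})) := fun f =>
    TopologicalSpace.GenerateOpen.basic _ ⟨f, rfl⟩
  have hmem : ∀ (f : R) (Q : SSpec S),
      Q ∈ SVar S (Ideal.span {f}) ↔ ∃ s ∈ S, s * f ∈ Q.1 := by
    intro f Q
    constructor
    · rintro ⟨s, hs, h⟩
      exact ⟨s, hs, h f (Ideal.mem_span_singleton_self f)⟩
    · rintro ⟨s, hs, hsf⟩
      refine ⟨s, hs, fun x hx => ?_⟩
      obtain ⟨c, rfl⟩ := Ideal.mem_span_singleton'.mp hx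
      rw [mul_left_comm]
      exact Ideal.mul_mem_left _ c hsf
  -- the candidate generic point, as an ideal
  let p : Ideal R :=
    { carrier := {f | ∃ Q ∈ F, ∃ s ∈ S, s * f ∈ Q.1}
      zero_mem' := by
        obtain ⟨Q, hQ⟩ := hirr.1
        exact ⟨Q, hQ, 1, hS1, by simpa using Q.1.zero_mem⟩
      add_mem' := by
        rintro a b ⟨Qa, hQaF, sa, hsa, ha⟩ ⟨Qb, hQbF, sb, hsb, hb⟩
        have h1 : Qa ∈ SVar S (Ideal.span {a}) := (hmem a Qa).2 ⟨sa, hsa, ha⟩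
        have h2 : Qb ∈ SVar S (Ideal.span {b}) := (hmem b Qb).2 ⟨sb, hsb, hb⟩
        obtain ⟨Q, hQF, hQa, hQb⟩ :=
          hpre _ _ (hopenV a) (hopenV b) ⟨Qa, hQaF, h1⟩ ⟨Qb, hQbF, h2⟩
        obtain ⟨s, hs, hsA⟩ := (hmem a Q).1 hQa
        obtain ⟨t, ht, htB⟩ := (hmem b Q).1 hQb
        refine ⟨Q, hQF, s * t, hSmul s hs t ht, ?_⟩
        have hrw : s * t * (a + b) = t * (s * a) + s * (t * b) := by ring
        rw [hrw]
        exact Q.1.add_mem (Q.1.mul_mem_left t hsA) (Q.1.mul_mem_left s htB)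
      smul_mem' := by
        rintro c x ⟨Q, hQ, s, hs, hsx⟩
        refine ⟨Q, hQ, s, hs, ?_⟩
        rw [smul_eq_mul, mul_left_comm]
        exact Q.1.mul_mem_left c hsx }
  have hpmem : ∀ x : R, x ∈ p ↔ ∃ Q ∈ F, ∃ s ∈ S, s * x ∈ Q.1 := fun x => Iff.rfl
  -- `p` is `S`-prime
  have hpS : IsSPrime S p := by
    constructor
    · rw [Set.eq_empty_iff_forall_notMem]
      rintro t ⟨htp, htS⟩
      obtain ⟨Q, hQF, s, hs, hst⟩ := (hpmem t).1 htp
      have := Q.2.1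
      rw [Set.eq_empty_iff_forall_notMem] at this
      exact this (s * t) ⟨hst, hSmul s hs t htS⟩
    · refine ⟨1, hS1, fun a b hab => ?_⟩
      obtain ⟨Q, hQF, t, ht, htab⟩ := (hpmem (a * b)).1 hab
      obtain ⟨sq, hsq, hq⟩ := Q.2.2
      have h1 : (t * a) * b ∈ Q.1 := by rw [mul_assoc]; exact htab
      rcases hq (t * a) b h1 with h | h
      · left
        rw [one_mul]
        refine (hpmem a).2 ⟨Q, hQF, sq * t, hSmul sq hsq t ht, ?_⟩
        rw [mul_assoc]; exact h
      · right
        rw [one_mul]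
        exact (hpmem b).2 ⟨Q, hQF, sq, hsq, h⟩
  let P : SSpec S := ⟨p, hpS⟩
  -- Claim A: any generated open containing P meets F
  have claimA : ∀ U : Set (SSpec S),
      TopologicalSpace.GenerateOpen {U | ∃ f : R, U = SVar S (Ideal.span {f})} U →
      P ∈ U → (F ∩ U).Nonempty := by
    intro U hU
    induction hU with
    | basic U hUb =>
      intro hPU
      obtain ⟨f, rfl⟩ := hUb
      obtain ⟨s, hs, hsf⟩ := (hmem f P).1 hPU
      obtain ⟨Q, hQF, t, ht, htsf⟩ := (hpmem (s * f)).1 hsf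
      refine ⟨Q, hQF, (hmem f Q).2 ⟨t * s, hSmul t ht s hs, ?_⟩⟩
      rw [mul_assoc]; exact htsf
    | univ =>
      intro _
      obtain ⟨Q, hQ⟩ := hirr.1
      exact ⟨Q, hQ, trivial⟩
    | inter U V hU hV ihU ihV =>
      intro hP
      exact hpre U V hU hV (ihU hP.1) (ihV hP.2)
    | sUnion K hK ih =>
      rintro ⟨U, hUK, hPU⟩
      obtain ⟨Q, hQF, hQU⟩ := ih U hUK hPU
      exact ⟨Q, hQF, Set.mem_sUnion.2 ⟨U, hUK, hQU⟩⟩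
  -- Claim B: any generated open meeting F contains P
  have claimB : ∀ U : Set (SSpec S),
      TopologicalSpace.GenerateOpen {U | ∃ f : R, U = SVar S (Ideal.span {f})} U →
      ∀ Q ∈ F, Q ∈ U → P ∈ U := by
    intro U hU
    induction hU with
    | basic U hUb =>
      intro Q hQF hQU
      obtain ⟨f, rfl⟩ := hUb
      obtain ⟨s, hs, hsf⟩ := (hmem f Q).1 hQU
      have hf : f ∈ p := (hpmem f).2 ⟨Q, hQF, s, hs, hsf⟩
      exact (hmem f P).2 ⟨1, hS1, by rw [one_mul]; exact hf⟩
    | univ => exact fun _ _ _ => trivial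
    | inter U V hU hV ihU ihV =>
      intro Q hQF hQ
      exact ⟨ihU Q hQF hQ.1, ihV Q hQF hQ.2⟩
    | sUnion K hK ih =>
      rintro Q hQF ⟨U, hUK, hQU⟩
      exact Set.mem_sUnion.2 ⟨U, hUK, ih U hUK Q hQF hQU⟩
  have hPF : P ∈ F := by
    by_contra hPF
    obtain ⟨Q, hQF, hQc⟩ := claimA Fᶜ hcl.isOpen_compl hPF
    exact hQc hQF
  refine ⟨P, hPF, Set.Subset.antisymm ?_ ?_⟩
  · intro Q hQF
    rw [mem_closure_iff]
    intro U hU hQU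
    exact ⟨P, claimB U hU Q hQF hQU, rfl⟩
  · exact closure_minimal (Set.singleton_subset_iff.2 hPF) hcl
end

section
/- If p and q are prime ideals of R that belong to Spec_S R (i.e. prime ideals disjoint from S), then Λ(p) = Λ(q) if and only if p = q, where Λ denotes closure of a point with respect to the S-flat topology. -/
lemma mem_SVar_iff_of_prime {R : Type*} [CommRing R] (S : Set R) (hS1 : (1 : R) ∈ S)
    (p : SSpec S) (hp : p.1.IsPrime) (f : R) :
    p ∈ SVar S (Ideal.span {f}) ↔ f ∈ p.1 := by
  constructor
  · rintro ⟨s, hsS, h⟩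
    have hsf : s * f ∈ p.1 := h f (Ideal.subset_span rfl)
    rcases hp.mem_or_mem hsf with hs | hf
    · exfalso
      have : s ∈ (p.1 : Set R) ∩ S := ⟨hs, hsS⟩
      rw [p.2.1] at this
      exact this
    · exact hf
  · intro hf
    exact ⟨1, hS1, fun x hx => by
      rw [one_mul]
      exact (Ideal.span_singleton_le_iff_mem _).mpr hf hx⟩

lemma le_of_mem_closure {R : Type*} [CommRing R] (S : Set R) (hS1 : (1 : R) ∈ S)
    (p q : SSpec S) (hp : p.1.IsPrime) (hq : q.1.IsPrime)
    (h : q ∈ @closure (SSpec S) (sFlatTop S) {p}) : q.1 ≤ p.1 := by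
  letI : TopologicalSpace (SSpec S) := sFlatTop S
  intro f hf
  have hopen : IsOpen (SVar S (Ideal.span {f})) :=
    TopologicalSpace.GenerateOpen.basic _ ⟨f, rfl⟩
  have := mem_closure_iff.mp h _ hopen
      ((mem_SVar_iff_of_prime S hS1 q hq f).mpr hf)
  rcases this with ⟨x, hx, hxp⟩
  rw [Set.mem_singleton_iff] at hxp
  subst hxp
  exact (mem_SVar_iff_of_prime S hS1 _ hp f).mp hx

/-- For prime ideals `p, q` in `Spec_S R` (primes disjoint from `S`):
`Λ(p) = Λ(q)` iff `p = q`, where `Λ` is the closure in the `S`-flat topology. -/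
theorem sFlat_closure_singleton_inj_on_primes {R : Type*} [CommRing R] [Nontrivial R]
    (S : Set R)
    (hS0 : (0 : R) ∉ S) (hS1 : (1 : R) ∈ S) (hSmul : ∀ s ∈ S, ∀ t ∈ S, s * t ∈ S)
    (p q : SSpec S) (hp : p.1.IsPrime) (hq : q.1.IsPrime) :
    @closure (SSpec S) (sFlatTop S) {p} = @closure (SSpec S) (sFlatTop S) {q} ↔ p = q := by
  letI : TopologicalSpace (SSpec S) := sFlatTop S
  constructor
  · intro h
    have hpq : p.1 ≤ q.1 := le_of_mem_closure S hS1 q p hq hp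
      (h ▸ subset_closure rfl)
    have hqp : q.1 ≤ p.1 := le_of_mem_closure S hS1 p q hp hq
      (h ▸ subset_closure rfl)
    exact Subtype.ext (le_antisymm hpq hqp)
  · rintro rfl; rfl
end

section
/- The following statements are equivalent: (1) Spec_S R with the S-flat topology is a T₀ space; (2) every S-prime ideal of R is a prime ideal. -/
/-!
Membership of a point `P` in the basic open set `V_S(f)` only depends on the `S`-saturation
`{f | s f ∈ P for some s ∈ S}` of `P`, so two points are inseparable exactly when their
saturations agree. The saturation of an `S`-prime ideal is again `S`-prime and is inseparable
from the ideal itself; hence `T₀` forces every `S`-prime ideal to be saturated, and a saturated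
`S`-prime ideal is prime. Conversely, a prime ideal disjoint from `S` is its own saturation, so
distinct prime points have distinct saturations.
-/

open TopologicalSpace

theorem inseparable_generateFrom_iff {X : Type*} {g : Set (Set X)} {x y : X} :
    @Inseparable X (generateFrom g) x y ↔ ∀ s ∈ g, (x ∈ s ↔ y ∈ s) := by
  let := generateFrom g
  refine ⟨fun h s hs ↦ h.mem_open_iff (isOpen_generateFrom_of_mem hs), fun h ↦ ?_⟩
  change nhds x = nhds y
  rw [nhds_generateFrom, nhds_generateFrom]
  congr! 3 with s
  exact and_congr_left fun hs ↦ h s hs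

theorem mem_sVar_span_singleton_iff {R : Type*} [CommRing R] {S : Set R} (P : SSpec S) (f : R) :
    P ∈ SVar S (Ideal.span {f}) ↔ ∃ s ∈ S, s * f ∈ P.1 := by
  refine ⟨fun ⟨s, hs, h⟩ ↦ ⟨s, hs, h f (Ideal.mem_span_singleton_self f)⟩, ?_⟩
  rintro ⟨s, hs, h⟩
  refine ⟨s, hs, fun x hx ↦ ?_⟩
  obtain ⟨c, rfl⟩ := Ideal.mem_span_singleton'.mp hx
  rw [mul_left_comm]
  exact P.1.mul_mem_left c h

section

variable {R : Type*} [CommRing R] {M : Submonoid R}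

theorem IsSPrime.disjoint {P : Ideal R} (hP : IsSPrime (M : Set R) P) :
    Disjoint (M : Set R) P := by
  rw [Set.disjoint_iff_inter_eq_empty, Set.inter_comm]
  exact hP.1

namespace Ideal

variable (M) in
/-- The `M`-saturation `{x | m * x ∈ P for some m ∈ M}` of `P`. -/
def saturation (P : Ideal R) : Ideal R :=
  (P.map (algebraMap R (Localization M))).under R

theorem mem_saturation {P : Ideal R} {x : R} : x ∈ P.saturation M ↔ ∃ m ∈ M, m * x ∈ P :=
  IsLocalization.algebraMap_mem_map_algebraMap_iff M (Localization M) P x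

theorem saturation_saturation (P : Ideal R) :
    (P.saturation M).saturation M = P.saturation M := by
  rw [saturation, saturation, IsLocalization.map_under M]

theorem saturation_eq_self {P : Ideal R} (hP : P.IsPrime) (hM : Disjoint (M : Set R) P) :
    P.saturation M = P :=
  IsLocalization.under_map_of_isPrime_disjoint M _ hP hM

end Ideal

theorem IsSPrime.saturation {P : Ideal R} (hP : IsSPrime (M : Set R) P) :
    IsSPrime (M : Set R) (P.saturation M) := by
  obtain ⟨s, hs, hsP⟩ := hP.2
  refine ⟨?_, s, hs, fun a b hab ↦ ?_⟩
  · rw [Set.eq_empty_iff_forall_notMem]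
    rintro x ⟨hx, hxM⟩
    obtain ⟨m, hm, hmx⟩ := Ideal.mem_saturation.mp hx
    exact hP.disjoint.ne_of_mem (M.mul_mem hm hxM) hmx rfl
  obtain ⟨m, hm, hmab⟩ := Ideal.mem_saturation.mp hab
  rcases hsP (m * a) b (by rwa [mul_assoc]) with h | h
  · exact .inl (Ideal.mem_saturation.mpr ⟨m, hm, by rwa [mul_left_comm]⟩)
  · exact .inr (Ideal.mem_saturation.mpr ⟨1, M.one_mem, by rwa [one_mul]⟩)

theorem IsSPrime.isPrime_of_saturation_eq {P : Ideal R} (hP : IsSPrime (M : Set R) P)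
    (hsat : P.saturation M = P) : P.IsPrime := by
  obtain ⟨s, hs, hsP⟩ := hP.2
  refine ⟨fun htop ↦ hP.disjoint.ne_of_mem M.one_mem (htop ▸ Submodule.mem_top) rfl,
    fun {a b} hab ↦ ?_⟩
  rw [← hsat, Ideal.mem_saturation, Ideal.mem_saturation]
  exact (hsP a b hab).imp (⟨s, hs, ·⟩) (⟨s, hs, ·⟩)

theorem sFlatTop_inseparable_iff_saturation_eq {x y : SSpec (M : Set R)} :
    @Inseparable _ (sFlatTop (M : Set R)) x y ↔ x.1.saturation M = y.1.saturation M := by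
  rw [sFlatTop, inseparable_generateFrom_iff, SetLike.ext_iff]
  simp only [Set.mem_ofPred_eq, forall_exists_index, forall_eq_apply_imp_iff,
    mem_sVar_span_singleton_iff, Ideal.mem_saturation, SetLike.mem_coe]

end

theorem sFlat_t0_iff_sPrime_isPrime_general {R : Type*} [CommRing R] (S : Set R)
    (hS1 : (1 : R) ∈ S) (hSmul : ∀ s ∈ S, ∀ t ∈ S, s * t ∈ S) :
    @T0Space (SSpec S) (sFlatTop S) ↔ ∀ P : Ideal R, IsSPrime S P → P.IsPrime := by
  obtain ⟨M, rfl⟩ : ∃ M : Submonoid R, (M : Set R) = S :=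
    ⟨⟨⟨S, fun {s t} hs ht ↦ hSmul s hs t ht⟩, hS1⟩, rfl⟩
  let := sFlatTop (M : Set R)
  rw [t0Space_iff_inseparable]
  refine ⟨fun hT0 P hP ↦ ?_, fun h x y hxy ↦ ?_⟩
  · have hsat := sFlatTop_inseparable_iff_saturation_eq (x := ⟨_, hP.saturation⟩) (y := ⟨P, hP⟩)
      |>.mpr (Ideal.saturation_saturation P)
    exact hP.isPrime_of_saturation_eq (congrArg Subtype.val (hT0 _ _ hsat))
  · have hsat := sFlatTop_inseparable_iff_saturation_eq.mp hxy
    rw [Ideal.saturation_eq_self (h _ x.2) x.2.disjoint,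
      Ideal.saturation_eq_self (h _ y.2) y.2.disjoint] at hsat
    exact Subtype.ext hsat

/-- `Spec_S R` with the `S`-flat topology is `T₀` if and only if every `S`-prime ideal
of `R` is a prime ideal. -/
theorem sFlat_t0_iff_sPrime_isPrime {R : Type*} [CommRing R] [Nontrivial R] (S : Set R)
    (hS0 : (0 : R) ∉ S) (hS1 : (1 : R) ∈ S) (hSmul : ∀ s ∈ S, ∀ t ∈ S, s * t ∈ S) :
    @T0Space (SSpec S) (sFlatTop S) ↔ ∀ P : Ideal R, IsSPrime S P → P.IsPrime :=
  sFlat_t0_iff_sPrime_isPrime_general S hS1 hSmul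
end
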